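/- arXiv:2405.16644 — 3 statements merged into one kernel-verified Lean document; each statement's English description precedes it below -/
import Mathlib

section
/- Under the assumptions of the LSA setup, the following deterministic identity holds: √n · Ā(θ̄_n − θ*) = −W + D₁ − D₂ − D₃ + D₄, where W = n^{−1/2} Σ_{k=n+1}^{2n} ε_k, D₁ = n^{−1/2}(θ_n − θ*)/α_n, D₂ = n^{−1/2}(θ_{2n} − θ*)/α_{2n}, D₃ = n^{−1/2} Σ_{k=n+1}^{2n} (A_k − Ā)(θ_{k−1} − θ*), and D₄ = n^{−1/2} Σ_{k=n+1}^{2n} (θ_{k−1} − θ*)(1/α_k − 1/α_{k−1}). -/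
/-!
Subtracting `Āθ*` from one LSA step gives
`Ā(θ_{k-1} - θ*) = α_k⁻¹(θ_{k-1} - θ_k) - (A_k - Ā)(θ_{k-1} - θ*) - ε_k`.
Summing over `k = n+1, …, 2n` and applying summation by parts to the first term, with
`θ_{k-1} - θ_k = (θ_{k-1} - θ*) - (θ_k - θ*)`, produces the boundary terms `D₁, D₂` and the
step-size variation term `D₄`; the scaling `√n · n⁻¹ = n^{-1/2}` turns the average into the sum.
-/

open MeasureTheory ProbabilityTheory Matrix Finset

noncomputable section

/-- Euclidean norm on `Fin d → ℝ`. -/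
def vecNorm {d : ℕ} (x : Fin d → ℝ) : ℝ :=
  Real.sqrt (∑ i, x i ^ 2)

/-- Operator (spectral) norm of a matrix with respect to Euclidean norms. -/
def matOpNorm {d : ℕ} (B : Matrix (Fin d) (Fin d) ℝ) : ℝ :=
  sSup {r : ℝ | ∃ x : Fin d → ℝ, vecNorm x = 1 ∧ r = vecNorm (B.mulVec x)}

/-- `Q`-weighted vector norm `‖x‖_Q = √(xᵀ Q x)`. -/
def qVecNorm {d : ℕ} (Q : Matrix (Fin d) (Fin d) ℝ) (x : Fin d → ℝ) : ℝ :=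
  Real.sqrt (x ⬝ᵥ Q.mulVec x)

/-- Induced matrix `Q`-norm `‖B‖_Q = sup_{x ≠ 0} ‖Bx‖_Q / ‖x‖_Q`. -/
def qMatNorm {d : ℕ} (Q B : Matrix (Fin d) (Fin d) ℝ) : ℝ :=
  sSup {r : ℝ | ∃ x : Fin d → ℝ, x ≠ 0 ∧ r = qVecNorm Q (B.mulVec x) / qVecNorm Q x}

/-- Smallest eigenvalue, via the Rayleigh quotient characterization. -/
def lambdaMin {d : ℕ} (M : Matrix (Fin d) (Fin d) ℝ) : ℝ :=
  sInf {r : ℝ | ∃ x : Fin d → ℝ, vecNorm x = 1 ∧ r = x ⬝ᵥ M.mulVec x}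

/-- Largest eigenvalue, via the Rayleigh quotient characterization. -/
def lambdaMax {d : ℕ} (M : Matrix (Fin d) (Fin d) ℝ) : ℝ :=
  sSup {r : ℝ | ∃ x : Fin d → ℝ, vecNorm x = 1 ∧ r = x ⬝ᵥ M.mulVec x}

/-- `−A` is Hurwitz: every (complex) eigenvalue of `A` has positive real part. -/
def NegHurwitz {d : ℕ} (A : Matrix (Fin d) (Fin d) ℝ) : Prop :=
  ∀ μ : ℂ, (A.map (algebraMap ℝ ℂ)).charpoly.IsRoot μ → 0 < μ.re

/-- Ordered matrix product `F k * F (k-1) * ⋯ * F m` (factors with larger index on the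
left); equal to the identity matrix when `m > k`. -/
def matProd {d : ℕ} (m k : ℕ) (F : ℕ → Matrix (Fin d) (Fin d) ℝ) :
    Matrix (Fin d) (Fin d) ℝ :=
  ((List.range' m (k + 1 - m)).reverse.map F).prod

theorem Finset.sum_Ico_smul_sub_succ {R M : Type*} [Ring R] [AddCommGroup M] [Module R M]
    (c : ℕ → R) (e : ℕ → M) {m N : ℕ} (hmN : m ≤ N) :
    ∑ k ∈ Ico m N, c (k + 1) • (e k - e (k + 1))
      = c m • e m - c N • e N + ∑ k ∈ Ico m N, (c (k + 1) - c k) • e k := by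
  have hsplit : ∀ k, c (k + 1) • (e k - e (k + 1))
      = -(c (k + 1) • e (k + 1) - c k • e k) + (c (k + 1) - c k) • e k := fun k => by
    simp only [smul_sub, sub_smul]; abel
  rw [sum_congr rfl fun k _ => hsplit k, sum_add_distrib, sum_neg_distrib,
    sum_Ico_sub (fun k => c k • e k) hmN, neg_sub]

theorem Finset.sum_Icc_succ_eq_sum_Ico {M : Type*} [AddCommMonoid M] (g : ℕ → M) (m N : ℕ) :
    ∑ k ∈ Icc (m + 1) N, g k = ∑ k ∈ Ico m N, g (k + 1) := by
  rw [← Ico_add_one_right_eq_Icc, sum_Ico_add']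

theorem Real.sqrt_smul_inv_card_smul_sum_sub {V ι : Type*} [AddCommGroup V] [Module ℝ V]
    {s : Finset ι} {n : ℕ} (hs : s.card = n) (x : ι → V) (y : V) :
    √n • ((n : ℝ)⁻¹ • ∑ k ∈ s, x k - y) = (√n)⁻¹ • ∑ k ∈ s, (x k - y) := by
  rw [sum_sub_distrib, sum_const, hs, ← Nat.cast_smul_eq_nsmul ℝ, smul_sub, smul_sub, smul_smul,
    smul_smul, ← div_eq_mul_inv, Real.sqrt_div_self', one_div, inv_mul_eq_div, Real.div_sqrt]

section LSA

variable {𝕜 ι : Type*} [Field 𝕜] [Fintype ι]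

theorem lsa_step_error_eq {A Abar : Matrix ι ι 𝕜} {b bbar θ θ' θstar : ι → 𝕜} {a : 𝕜} (ha : a ≠ 0)
    (hsol : Abar *ᵥ θstar = bbar) (hθ' : θ' = θ - a • (A *ᵥ θ - b)) :
    Abar *ᵥ (θ - θstar) = a⁻¹ • (θ - θ') - (A - Abar) *ᵥ (θ - θstar)
      - ((A - Abar) *ᵥ θstar - (b - bbar)) := by
  rw [hθ', sub_sub_cancel, inv_smul_smul₀ ha, ← hsol]
  simp only [sub_mulVec, mulVec_sub]
  abel

theorem lsa_sum_error_eq {A : ℕ → Matrix ι ι 𝕜} {b : ℕ → ι → 𝕜} {α : ℕ → 𝕜}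
    {Abar : Matrix ι ι 𝕜} {bbar θstar : ι → 𝕜} {eps : ℕ → ι → 𝕜} {θ : ℕ → ι → 𝕜}
    (hα : ∀ k, α k ≠ 0) (hsol : Abar *ᵥ θstar = bbar)
    (heps : ∀ k, eps k = (A k - Abar) *ᵥ θstar - (b k - bbar))
    (hθrec : ∀ k, θ (k + 1) = θ k - α (k + 1) • (A (k + 1) *ᵥ θ k - b (k + 1)))
    {m N : ℕ} (hmN : m ≤ N) :
    Abar *ᵥ ∑ k ∈ Ico m N, (θ k - θstar)
      = -∑ k ∈ Ico m N, eps (k + 1)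
        + (α m)⁻¹ • (θ m - θstar) - (α N)⁻¹ • (θ N - θstar)
        - ∑ k ∈ Ico m N, (A (k + 1) - Abar) *ᵥ (θ k - θstar)
        + ∑ k ∈ Ico m N, ((α (k + 1))⁻¹ - (α k)⁻¹) • (θ k - θstar) := by
  have hstep : ∀ k, Abar *ᵥ (θ k - θstar)
      = (α (k + 1))⁻¹ • ((θ k - θstar) - (θ (k + 1) - θstar))
        - (A (k + 1) - Abar) *ᵥ (θ k - θstar) - eps (k + 1) := fun k => by
    rw [sub_sub_sub_cancel_right, heps, lsa_step_error_eq (hα (k + 1)) hsol (hθrec k)]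
  rw [mulVec_sum, sum_congr rfl fun k _ => hstep k, sum_sub_distrib, sum_sub_distrib,
    sum_Ico_smul_sub_succ (fun k => (α k)⁻¹) (fun k => θ k - θstar) hmN]
  abel

end LSA

theorem stmt_1_general {d n : ℕ}
    (A : ℕ → Matrix (Fin d) (Fin d) ℝ) (b : ℕ → Fin d → ℝ)
    (α : ℕ → ℝ) (hα : ∀ k, 0 < α k)
    (Abar : Matrix (Fin d) (Fin d) ℝ) (bbar : Fin d → ℝ)
    (θstar : Fin d → ℝ) (hsol : Abar.mulVec θstar = bbar)
    (eps : ℕ → Fin d → ℝ)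
    (heps : ∀ k, eps k = (A k - Abar).mulVec θstar - (b k - bbar))
    (θ : ℕ → Fin d → ℝ)
    (hθrec : ∀ k : ℕ, θ (k + 1) = θ k - α (k + 1) • ((A (k + 1)).mulVec (θ k) - b (k + 1))) :
    Real.sqrt n • Abar.mulVec (((n : ℝ)⁻¹ • ∑ k ∈ Finset.Ico n (2 * n), θ k) - θstar)
      = - ((Real.sqrt n)⁻¹ • ∑ k ∈ Finset.Icc (n + 1) (2 * n), eps k)
        + (Real.sqrt n)⁻¹ • (α n)⁻¹ • (θ n - θstar)
        - (Real.sqrt n)⁻¹ • (α (2 * n))⁻¹ • (θ (2 * n) - θstar)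
        - (Real.sqrt n)⁻¹ •
            ∑ k ∈ Finset.Icc (n + 1) (2 * n), (A k - Abar).mulVec (θ (k - 1) - θstar)
        + (Real.sqrt n)⁻¹ •
            ∑ k ∈ Finset.Icc (n + 1) (2 * n),
              ((α k)⁻¹ - (α (k - 1))⁻¹) • (θ (k - 1) - θstar) := by
  have hcard : (Ico n (2 * n)).card = n := by rw [Nat.card_Ico]; omega
  rw [← mulVec_smul, Real.sqrt_smul_inv_card_smul_sum_sub hcard, mulVec_smul,
    lsa_sum_error_eq (fun k => (hα k).ne') hsol heps hθrec (by omega)]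
  simp only [sum_Icc_succ_eq_sum_Ico, Nat.add_sub_cancel, smul_add, smul_sub, smul_neg]

/-- Proposition: expansion of the Polyak–Ruppert error.
For the LSA iterates `θ_k = θ_{k−1} − α_k(A_k θ_{k−1} − b_k)` with `Āθ* = b̄` and
`ε_k = (A_k − Ā)θ* − (b_k − b̄)`, the deterministic identity
`√n·Ā(θ̄_n − θ*) = −W + D₁ − D₂ − D₃ + D₄` holds, where
`W = n^{−1/2} Σ_{k=n+1}^{2n} ε_k`, `D₁ = n^{−1/2}(θ_n − θ*)/α_n`,
`D₂ = n^{−1/2}(θ_{2n} − θ*)/α_{2n}`,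
`D₃ = n^{−1/2} Σ_{k=n+1}^{2n} (A_k − Ā)(θ_{k−1} − θ*)`, and
`D₄ = n^{−1/2} Σ_{k=n+1}^{2n} (θ_{k−1} − θ*)(1/α_k − 1/α_{k−1})`. -/
theorem stmt_1 {d n : ℕ} (hd : 0 < d) (hn : 0 < n)
    (A : ℕ → Matrix (Fin d) (Fin d) ℝ) (b : ℕ → Fin d → ℝ)
    (α : ℕ → ℝ) (hα : ∀ k, 0 < α k)
    (Abar : Matrix (Fin d) (Fin d) ℝ) (bbar : Fin d → ℝ)
    (θstar : Fin d → ℝ) (hsol : Abar.mulVec θstar = bbar)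
    (eps : ℕ → Fin d → ℝ)
    (heps : ∀ k, eps k = (A k - Abar).mulVec θstar - (b k - bbar))
    (θ0 : Fin d → ℝ) (θ : ℕ → Fin d → ℝ) (hθ0 : θ 0 = θ0)
    (hθrec : ∀ k : ℕ, θ (k + 1) = θ k - α (k + 1) • ((A (k + 1)).mulVec (θ k) - b (k + 1))) :
    Real.sqrt n • Abar.mulVec (((n : ℝ)⁻¹ • ∑ k ∈ Finset.Ico n (2 * n), θ k) - θstar)
      = - ((Real.sqrt n)⁻¹ • ∑ k ∈ Finset.Icc (n + 1) (2 * n), eps k)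
        + (Real.sqrt n)⁻¹ • (α n)⁻¹ • (θ n - θstar)
        - (Real.sqrt n)⁻¹ • (α (2 * n))⁻¹ • (θ (2 * n) - θstar)
        - (Real.sqrt n)⁻¹ •
            ∑ k ∈ Finset.Icc (n + 1) (2 * n), (A k - Abar).mulVec (θ (k - 1) - θstar)
        + (Real.sqrt n)⁻¹ •
            ∑ k ∈ Finset.Icc (n + 1) (2 * n),
              ((α k)⁻¹ - (α (k - 1))⁻¹) • (θ (k - 1) - θstar) :=
  stmt_1_general A b α hα Abar bbar θstar hsol eps heps θ hθrec

end
end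

section
/- Let γ ∈ (0,1), and let (φ, φ′, r) be a random triple where φ, φ′ are random vectors in ℝ^d with ‖φ‖ ≤ 1 and ‖φ′‖ ≤ 1 almost surely, φ and φ′ have the same distribution, and r is a random variable with values in [0,1]. Set A = φ(φ − γφ′)ᵀ, b = φ·r, Ā = E[A], b̄ = E[b], and Σ_φ = E[φφᵀ], assumed positive definite with smallest eigenvalue λ_min(Σ_φ) > 0; let θ* solve Āθ* = b̄. Then: (i) almost surely max(‖A‖, ‖A − Ā‖) ≤ 2(1+γ) and ‖(A − Ā)θ* − (b − b̄)‖ ≤ 2(1+γ)(‖θ*‖ + 1); (ii) for every α ∈ [0, (1−γ)/(1+γ)²], ‖I − αĀ‖² ≤ 1 − α(1−γ)λ_min(Σ_φ). -/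
open MeasureTheory ProbabilityTheory Matrix Finset

noncomputable section

/-!
Part (i) is pointwise: `A = φ (φ - γφ')ᵀ` has rank one, so
`‖A x‖ ≤ ‖φ‖ ‖φ - γφ'‖ ‖x‖ ≤ (1 + γ) ‖x‖`; with `‖Ā x‖ ≤ (1 + γ) ‖x‖` (a consequence of (ii)) and `‖b‖, ‖b̄‖ ≤ 1` both bounds follow from the
triangle inequality.

For (ii) fix a unit vector `x` and put `u = xᵀφ`, `v = xᵀφ'`. Stationarity gives
`E u² = E v² = xᵀ Σ x =: s`, so AM–GM, `2 |E uv| ≤ E u² + E v²`, yields `|E uv| ≤ s`. Hence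
`xᵀ Ā x = s - γ E uv ≥ (1 - γ) s` and `E (u - γv)² ≤ (1 + γ)² s`; AM–GM once more, applied to
`‖Ā x‖² = E[(Ā x)ᵀφ · (u - γv)]`, gives `‖Ā x‖² ≤ (1 + γ)² s`. Expanding `‖x - α Ā x‖²` then
bounds it by `1 - α (1 - γ) s ≤ 1 - α (1 - γ) λ_min(Σ)` as soon as `α (1 + γ)² ≤ 1 - γ`.
-/

open scoped ENNReal

section VecNorm

variable {d : ℕ}

lemma vecNorm_eq_norm_toLp (x : Fin d → ℝ) :
    vecNorm x = ‖(WithLp.toLp 2 x : EuclideanSpace ℝ (Fin d))‖ := by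
  simp [vecNorm, EuclideanSpace.norm_eq]

lemma vecNorm_nonneg (x : Fin d → ℝ) : 0 ≤ vecNorm x := Real.sqrt_nonneg _

lemma vecNorm_sq (x : Fin d → ℝ) : vecNorm x ^ 2 = x ⬝ᵥ x := by
  rw [vecNorm, Real.sq_sqrt (by positivity)]
  simp [dotProduct, sq]

lemma abs_dotProduct_le (x y : Fin d → ℝ) : |x ⬝ᵥ y| ≤ vecNorm x * vecNorm y := by
  simpa [vecNorm_eq_norm_toLp, EuclideanSpace.inner_eq_star_dotProduct, dotProduct_comm] using
    abs_real_inner_le_norm (WithLp.toLp 2 x : EuclideanSpace ℝ (Fin d)) (WithLp.toLp 2 y)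

lemma vecNorm_sub_le (x y : Fin d → ℝ) : vecNorm (x - y) ≤ vecNorm x + vecNorm y := by
  simpa [vecNorm_eq_norm_toLp] using
    norm_sub_le (WithLp.toLp 2 x : EuclideanSpace ℝ (Fin d)) (WithLp.toLp 2 y)

lemma vecNorm_smul (c : ℝ) (x : Fin d → ℝ) : vecNorm (c • x) = |c| * vecNorm x := by
  simp [vecNorm_eq_norm_toLp, norm_smul]

lemma vecNorm_sub_smul_le {u v : Fin d → ℝ} {γ : ℝ} (hγ : 0 ≤ γ) (hu : vecNorm u ≤ 1)
    (hv : vecNorm v ≤ 1) : vecNorm (u - γ • v) ≤ 1 + γ := by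
  grw [vecNorm_sub_le, vecNorm_smul, abs_of_nonneg hγ, hu, hv, mul_one]

lemma vecMulVec_mulVec_eq (u v x : Fin d → ℝ) : vecMulVec u v *ᵥ x = (v ⬝ᵥ x) • u := by
  ext i
  simp [mulVec, dotProduct, vecMulVec, Finset.mul_sum, mul_comm, mul_left_comm]

lemma vecNorm_vecMulVec_mulVec_le (u v x : Fin d → ℝ) :
    vecNorm (vecMulVec u v *ᵥ x) ≤ vecNorm u * vecNorm v * vecNorm x := by
  rw [vecMulVec_mulVec_eq, vecNorm_smul, mul_comm, mul_assoc]
  exact mul_le_mul_of_nonneg_left (abs_dotProduct_le v x) (vecNorm_nonneg u)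

end VecNorm

section OperatorNorm

variable {d : ℕ}

lemma matOpNorm_nonneg (B : Matrix (Fin d) (Fin d) ℝ) : 0 ≤ matOpNorm B :=
  Real.sSup_nonneg (by rintro _ ⟨x, -, rfl⟩; exact vecNorm_nonneg _)

lemma matOpNorm_le {B : Matrix (Fin d) (Fin d) ℝ} {c : ℝ} (hc : 0 ≤ c)
    (h : ∀ x, vecNorm x = 1 → vecNorm (B *ᵥ x) ≤ c) : matOpNorm B ≤ c :=
  Real.sSup_le (by rintro _ ⟨x, hx, rfl⟩; exact h x hx) hc

lemma matOpNorm_sq_le {B : Matrix (Fin d) (Fin d) ℝ} {c : ℝ} (hc : 0 ≤ c)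
    (h : ∀ x, vecNorm x = 1 → vecNorm (B *ᵥ x) ^ 2 ≤ c) : matOpNorm B ^ 2 ≤ c :=
  (Real.le_sqrt (matOpNorm_nonneg B) hc).1 <| matOpNorm_le (Real.sqrt_nonneg c) fun x hx =>
    Real.le_sqrt_of_sq_le (h x hx)

lemma lambdaMin_le {M : Matrix (Fin d) (Fin d) ℝ} (hM : ∀ y, 0 ≤ y ⬝ᵥ M *ᵥ y) {x : Fin d → ℝ}
    (hx : vecNorm x = 1) : lambdaMin M ≤ x ⬝ᵥ M *ᵥ x :=
  csInf_le ⟨0, by rintro _ ⟨y, -, rfl⟩; exact hM y⟩ ⟨x, hx, rfl⟩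

lemma lambdaMin_le_of_forall_le {M : Matrix (Fin d) (Fin d) ℝ} (hM : ∀ y, 0 ≤ y ⬝ᵥ M *ᵥ y)
    {c : ℝ} (hc : 0 ≤ c) (h : ∀ x, vecNorm x = 1 → x ⬝ᵥ M *ᵥ x ≤ c) : lambdaMin M ≤ c := by
  -- for `d = 0` there is no unit vector and `lambdaMin M = sInf ∅ = 0`
  by_cases hunit : ∃ x : Fin d → ℝ, vecNorm x = 1
  · obtain ⟨x, hx⟩ := hunit
    exact (lambdaMin_le hM hx).trans (h x hx)
  · have hempty : {r : ℝ | ∃ x : Fin d → ℝ, vecNorm x = 1 ∧ r = x ⬝ᵥ M *ᵥ x} = ∅ :=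
      Set.eq_empty_of_forall_notMem fun _ ⟨x, hx, _⟩ => hunit ⟨x, hx⟩
    rwa [lambdaMin, hempty, Real.sInf_empty]

lemma vecNorm_one_sub_smul_mulVec_sq_le {A S : Matrix (Fin d) (Fin d) ℝ} {x : Fin d → ℝ}
    {μ L α : ℝ} (hx : vecNorm x = 1) (hS : 0 ≤ x ⬝ᵥ S *ᵥ x)
    (hmono : μ * (x ⬝ᵥ S *ᵥ x) ≤ x ⬝ᵥ A *ᵥ x) (hlip : vecNorm (A *ᵥ x) ^ 2 ≤ L * (x ⬝ᵥ S *ᵥ x))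
    (hα : 0 ≤ α) (hαL : α * L ≤ μ) :
    vecNorm ((1 - α • A) *ᵥ x) ^ 2 ≤ 1 - α * μ * (x ⬝ᵥ S *ᵥ x) := by
  have hxx : x ⬝ᵥ x = 1 := by rw [← vecNorm_sq, hx, one_pow]
  have hexpand : vecNorm ((1 - α • A) *ᵥ x) ^ 2
      = 1 - 2 * α * (x ⬝ᵥ A *ᵥ x) + α ^ 2 * vecNorm (A *ᵥ x) ^ 2 := by
    simp only [vecNorm_sq, sub_mulVec, one_mulVec, smul_mulVec, dotProduct_sub, sub_dotProduct,
      dotProduct_smul, smul_dotProduct, smul_eq_mul, hxx, dotProduct_comm (A *ᵥ x) x]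
    ring
  rw [hexpand]
  nlinarith [mul_le_mul_of_nonneg_left hmono hα, mul_le_mul_of_nonneg_left hlip (sq_nonneg α),
    mul_le_mul_of_nonneg_right hαL (mul_nonneg hα hS)]

end OperatorNorm

section Moments

variable {Ω : Type*} [MeasurableSpace Ω] {P : Measure Ω} {d : ℕ}

lemma memLp_top_dotProduct {f : Ω → Fin d → ℝ} (hf : MemLp f ∞ P) (x : Fin d → ℝ) :
    MemLp (fun ω => x ⬝ᵥ f ω) ∞ P :=
  memLp_finsetSum _ fun i _ => (hf.eval i).const_mul (x i)

lemma memLp_top_of_vecNorm_le {f : Ω → Fin d → ℝ} (hf : Measurable f) {C : ℝ}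
    (hC : ∀ᵐ ω ∂P, vecNorm (f ω) ≤ C) : MemLp f ∞ P := by
  refine memLp_top_of_bound hf.aestronglyMeasurable C (hC.mono fun ω h => ?_)
  refine (pi_norm_le_iff_of_nonneg ((vecNorm_nonneg _).trans h)).2 fun i => ?_
  rw [vecNorm_eq_norm_toLp] at h
  exact (PiLp.norm_apply_le _ i).trans h

lemma integrable_mul_of_memLp_top [IsFiniteMeasure P] {u v : Ω → ℝ} (hu : MemLp u ∞ P)
    (hv : MemLp v ∞ P) : Integrable (fun ω => u ω * v ω) P :=
  (hv.mul hu).integrable le_top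

lemma two_mul_abs_integral_mul_le [IsFiniteMeasure P] {u v : Ω → ℝ} (hu : MemLp u ∞ P)
    (hv : MemLp v ∞ P) :
    2 * |∫ ω, u ω * v ω ∂P| ≤ ∫ ω, u ω * u ω ∂P + ∫ ω, v ω * v ω ∂P := by
  have huv := integrable_mul_of_memLp_top hu hv
  calc 2 * |∫ ω, u ω * v ω ∂P| = |∫ ω, 2 * (u ω * v ω) ∂P| := by
        rw [integral_const_mul, abs_mul, abs_two]
    _ ≤ ∫ ω, |2 * (u ω * v ω)| ∂P := abs_integral_le_integral_abs
    _ ≤ ∫ ω, (u ω * u ω + v ω * v ω) ∂P := by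
        refine integral_mono (huv.const_mul 2).abs
          ((integrable_mul_of_memLp_top hu hu).add (integrable_mul_of_memLp_top hv hv))
          fun ω => abs_le.2 ⟨?_, ?_⟩
        · nlinarith [sq_nonneg (u ω + v ω)]
        · nlinarith [sq_nonneg (u ω - v ω)]
    _ = _ := integral_add (integrable_mul_of_memLp_top hu hu) (integrable_mul_of_memLp_top hv hv)

def crossMoment (P : Measure Ω) (f g : Ω → Fin d → ℝ) : Matrix (Fin d) (Fin d) ℝ :=
  Matrix.of fun i j => ∫ ω, f ω i * g ω j ∂P

lemma dotProduct_crossMoment_mulVec [IsFiniteMeasure P] {f g : Ω → Fin d → ℝ}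
    (hf : MemLp f ∞ P) (hg : MemLp g ∞ P) (x y : Fin d → ℝ) :
    y ⬝ᵥ crossMoment P f g *ᵥ x = ∫ ω, (y ⬝ᵥ f ω) * (x ⬝ᵥ g ω) ∂P := by
  have hint : ∀ i j, Integrable (fun ω => y i * x j * (f ω i * g ω j)) P := fun i j =>
    (integrable_mul_of_memLp_top (hf.eval i) (hg.eval j)).const_mul _
  have hpt : ∀ ω, (y ⬝ᵥ f ω) * (x ⬝ᵥ g ω) = ∑ i, ∑ j, y i * x j * (f ω i * g ω j) := by
    intro ω
    simp only [dotProduct, Finset.sum_mul_sum]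
    exact Finset.sum_congr rfl fun i _ => Finset.sum_congr rfl fun j _ => by ring
  simp_rw [hpt]
  rw [integral_finsetSum _ fun i _ => integrable_finsetSum _ fun j _ => hint i j]
  simp_rw [integral_finsetSum _ fun j _ => hint _ j, integral_const_mul]
  simp only [dotProduct, mulVec, crossMoment, of_apply, Finset.mul_sum]
  exact Finset.sum_congr rfl fun i _ => Finset.sum_congr rfl fun j _ => by ring

lemma vecNorm_le_of_apply_eq_integral [IsProbabilityMeasure P] {v : Fin d → ℝ} {f : Ω → Fin d → ℝ}
    (hf : Measurable f) {C : ℝ} (hC : ∀ᵐ ω ∂P, vecNorm (f ω) ≤ C)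
    (hv : ∀ i, v i = ∫ ω, f ω i ∂P) : vecNorm v ≤ C := by
  obtain ⟨ω₀, hω₀⟩ := hC.exists
  have hf' := memLp_top_of_vecNorm_le hf hC
  have hdot : ∫ ω, v ⬝ᵥ f ω ∂P = v ⬝ᵥ v := by
    simp only [dotProduct]
    rw [integral_finsetSum _ fun i _ => ((hf'.eval i).integrable le_top).const_mul _]
    simp_rw [integral_const_mul, ← hv]
  have hle : v ⬝ᵥ v ≤ vecNorm v * C := by
    rw [← hdot]
    refine (integral_mono_ae ((memLp_top_dotProduct hf' v).integrable le_top)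
      (integrable_const (vecNorm v * C)) (hC.mono fun ω h => ?_)).trans_eq (by simp)
    exact (le_abs_self _).trans ((abs_dotProduct_le _ _).trans
      (mul_le_mul_of_nonneg_left h (vecNorm_nonneg v)))
  rw [← vecNorm_sq] at hle
  nlinarith [vecNorm_nonneg v, vecNorm_nonneg (f ω₀)]

end Moments

section StationaryPair

variable {Ω : Type*} [MeasurableSpace Ω] {P : Measure Ω} {d : ℕ}

structure IsBoundedStationaryPair (P : Measure Ω) (φ φ' : Ω → Fin d → ℝ) : Prop where
  measurable_fst : Measurable φ
  measurable_snd : Measurable φ'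
  vecNorm_fst_le : ∀ᵐ ω ∂P, vecNorm (φ ω) ≤ 1
  vecNorm_snd_le : ∀ᵐ ω ∂P, vecNorm (φ' ω) ≤ 1
  map_eq : P.map φ = P.map φ'

namespace IsBoundedStationaryPair

variable {φ φ' : Ω → Fin d → ℝ}

lemma memLp_fst (h : IsBoundedStationaryPair P φ φ') : MemLp φ ∞ P :=
  memLp_top_of_vecNorm_le h.measurable_fst h.vecNorm_fst_le

lemma memLp_snd (h : IsBoundedStationaryPair P φ φ') : MemLp φ' ∞ P :=
  memLp_top_of_vecNorm_le h.measurable_snd h.vecNorm_snd_le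

lemma integral_comp_snd (h : IsBoundedStationaryPair P φ φ') {g : (Fin d → ℝ) → ℝ}
    (hg : Continuous g) : ∫ ω, g (φ' ω) ∂P = ∫ ω, g (φ ω) ∂P := by
  rw [← integral_map h.measurable_snd.aemeasurable hg.aestronglyMeasurable, ← h.map_eq,
    integral_map h.measurable_fst.aemeasurable hg.aestronglyMeasurable]

lemma quadForm_crossMoment_self_nonneg [IsFiniteMeasure P] (h : IsBoundedStationaryPair P φ φ')
    (x : Fin d → ℝ) : 0 ≤ x ⬝ᵥ crossMoment P φ φ *ᵥ x := by
  rw [dotProduct_crossMoment_mulVec h.memLp_fst h.memLp_fst]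
  exact integral_nonneg fun ω => mul_self_nonneg _

lemma quadForm_crossMoment_self_le [IsProbabilityMeasure P] (h : IsBoundedStationaryPair P φ φ')
    (x : Fin d → ℝ) : x ⬝ᵥ crossMoment P φ φ *ᵥ x ≤ vecNorm x ^ 2 := by
  rw [dotProduct_crossMoment_mulVec h.memLp_fst h.memLp_fst]
  refine (integral_mono_ae (integrable_mul_of_memLp_top (memLp_top_dotProduct h.memLp_fst x)
    (memLp_top_dotProduct h.memLp_fst x)) (integrable_const (vecNorm x ^ 2))
    (h.vecNorm_fst_le.mono fun ω hω => ?_)).trans_eq (by simp)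
  have := (abs_dotProduct_le x (φ ω)).trans (mul_le_of_le_one_right (vecNorm_nonneg x) hω)
  exact (abs_mul_abs_self _).symm.trans_le
    ((mul_le_mul this this (abs_nonneg _) (vecNorm_nonneg x)).trans_eq (sq _).symm)

lemma integral_dotProduct_snd_mul_self [IsFiniteMeasure P] (h : IsBoundedStationaryPair P φ φ')
    (x : Fin d → ℝ) :
    ∫ ω, (x ⬝ᵥ φ' ω) * (x ⬝ᵥ φ' ω) ∂P = x ⬝ᵥ crossMoment P φ φ *ᵥ x := by
  rw [dotProduct_crossMoment_mulVec h.memLp_fst h.memLp_fst]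
  exact h.integral_comp_snd (g := fun y => (x ⬝ᵥ y) * (x ⬝ᵥ y)) (by fun_prop)

lemma abs_integral_dotProduct_mul_snd_le [IsFiniteMeasure P] (h : IsBoundedStationaryPair P φ φ')
    (x : Fin d → ℝ) :
    |∫ ω, (x ⬝ᵥ φ ω) * (x ⬝ᵥ φ' ω) ∂P| ≤ x ⬝ᵥ crossMoment P φ φ *ᵥ x := by
  have := two_mul_abs_integral_mul_le (memLp_top_dotProduct h.memLp_fst x)
    (memLp_top_dotProduct h.memLp_snd x)
  rw [h.integral_dotProduct_snd_mul_self,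
    ← dotProduct_crossMoment_mulVec h.memLp_fst h.memLp_fst] at this
  linarith

lemma quadForm_crossMoment_ge [IsFiniteMeasure P] (h : IsBoundedStationaryPair P φ φ') {γ : ℝ}
    (hγ : 0 ≤ γ) (x : Fin d → ℝ) :
    (1 - γ) * (x ⬝ᵥ crossMoment P φ φ *ᵥ x) ≤ x ⬝ᵥ crossMoment P φ (φ - γ • φ') *ᵥ x := by
  have hu := memLp_top_dotProduct h.memLp_fst x
  have hv := memLp_top_dotProduct h.memLp_snd x
  have hA : x ⬝ᵥ crossMoment P φ (φ - γ • φ') *ᵥ x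
      = x ⬝ᵥ crossMoment P φ φ *ᵥ x - γ * ∫ ω, (x ⬝ᵥ φ ω) * (x ⬝ᵥ φ' ω) ∂P := by
    rw [dotProduct_crossMoment_mulVec h.memLp_fst (h.memLp_fst.sub (h.memLp_snd.const_smul γ)),
      dotProduct_crossMoment_mulVec h.memLp_fst h.memLp_fst, ← integral_const_mul,
      ← integral_sub (integrable_mul_of_memLp_top hu hu)
        ((integrable_mul_of_memLp_top hu hv).const_mul γ)]
    congr 1 with ω
    simp only [Pi.sub_apply, Pi.smul_apply, dotProduct_sub, dotProduct_smul, smul_eq_mul]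
    ring
  rw [hA]
  have hc := (le_abs_self _).trans (h.abs_integral_dotProduct_mul_snd_le x)
  nlinarith [mul_le_mul_of_nonneg_left hc hγ]

lemma integral_sq_dotProduct_sub_smul_le [IsFiniteMeasure P]
    (h : IsBoundedStationaryPair P φ φ') {γ : ℝ} (hγ : 0 ≤ γ) (x : Fin d → ℝ) :
    ∫ ω, (x ⬝ᵥ (φ - γ • φ') ω) * (x ⬝ᵥ (φ - γ • φ') ω) ∂P
      ≤ (1 + γ) ^ 2 * (x ⬝ᵥ crossMoment P φ φ *ᵥ x) := by
  have hu := memLp_top_dotProduct h.memLp_fst x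
  have hv := memLp_top_dotProduct h.memLp_snd x
  have hexpand : ∫ ω, (x ⬝ᵥ (φ - γ • φ') ω) * (x ⬝ᵥ (φ - γ • φ') ω) ∂P
      = ∫ ω, (x ⬝ᵥ φ ω) * (x ⬝ᵥ φ ω) ∂P - 2 * γ * ∫ ω, (x ⬝ᵥ φ ω) * (x ⬝ᵥ φ' ω) ∂P
        + γ ^ 2 * ∫ ω, (x ⬝ᵥ φ' ω) * (x ⬝ᵥ φ' ω) ∂P := by
    have huu := integrable_mul_of_memLp_top hu hu
    have huv := integrable_mul_of_memLp_top hu hv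
    have hvv := integrable_mul_of_memLp_top hv hv
    have hsub : Integrable (fun ω => (x ⬝ᵥ φ ω) * (x ⬝ᵥ φ ω)
        - 2 * γ * ((x ⬝ᵥ φ ω) * (x ⬝ᵥ φ' ω))) P := huu.sub (huv.const_mul _)
    rw [← integral_const_mul, ← integral_const_mul, ← integral_sub huu (huv.const_mul _),
      ← integral_add hsub (hvv.const_mul _)]
    congr 1 with ω
    simp only [Pi.sub_apply, Pi.smul_apply, dotProduct_sub, dotProduct_smul, smul_eq_mul]
    ring
  have hc : -(x ⬝ᵥ crossMoment P φ φ *ᵥ x) ≤ ∫ ω, (x ⬝ᵥ φ ω) * (x ⬝ᵥ φ' ω) ∂P :=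
    (neg_le_neg (h.abs_integral_dotProduct_mul_snd_le x)).trans (neg_abs_le _)
  rw [hexpand, h.integral_dotProduct_snd_mul_self,
    ← dotProduct_crossMoment_mulVec h.memLp_fst h.memLp_fst]
  nlinarith [mul_le_mul_of_nonneg_left hc hγ]

lemma vecNorm_crossMoment_mulVec_sq_le [IsProbabilityMeasure P]
    (h : IsBoundedStationaryPair P φ φ') {γ : ℝ} (hγ : 0 ≤ γ) (x : Fin d → ℝ) :
    vecNorm (crossMoment P φ (φ - γ • φ') *ᵥ x) ^ 2
      ≤ (1 + γ) ^ 2 * (x ⬝ᵥ crossMoment P φ φ *ᵥ x) := by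
  set w := crossMoment P φ (φ - γ • φ') *ᵥ x
  have hg : MemLp (φ - γ • φ') ∞ P := h.memLp_fst.sub (h.memLp_snd.const_smul γ)
  have hw : vecNorm w ^ 2 = ∫ ω, (w ⬝ᵥ φ ω) * (x ⬝ᵥ (φ - γ • φ') ω) ∂P := by
    rw [vecNorm_sq]
    exact dotProduct_crossMoment_mulVec h.memLp_fst hg x w
  have hamgm := two_mul_abs_integral_mul_le (memLp_top_dotProduct h.memLp_fst w)
    (memLp_top_dotProduct hg x)
  have hww := h.quadForm_crossMoment_self_le w
  rw [dotProduct_crossMoment_mulVec h.memLp_fst h.memLp_fst] at hww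
  have := h.integral_sq_dotProduct_sub_smul_le hγ x
  rw [← hw] at hamgm
  linarith [le_abs_self (vecNorm w ^ 2)]

lemma vecNorm_crossMoment_mulVec_le [IsProbabilityMeasure P]
    (h : IsBoundedStationaryPair P φ φ') {γ : ℝ} (hγ : 0 ≤ γ) (x : Fin d → ℝ) :
    vecNorm (crossMoment P φ (φ - γ • φ') *ᵥ x) ≤ (1 + γ) * vecNorm x := by
  refine (pow_le_pow_iff_left₀ (vecNorm_nonneg _) (mul_nonneg (by linarith) (vecNorm_nonneg x))
    two_ne_zero).1 ?_
  grw [h.vecNorm_crossMoment_mulVec_sq_le hγ x, h.quadForm_crossMoment_self_le x, mul_pow]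

end IsBoundedStationaryPair

end StationaryPair

section NoiseBounds

variable {d : ℕ} {A B : Matrix (Fin d) (Fin d) ℝ} {c : ℝ}

lemma vecNorm_sub_mulVec_le (hA : ∀ x, vecNorm (A *ᵥ x) ≤ c * vecNorm x)
    (hB : ∀ x, vecNorm (B *ᵥ x) ≤ c * vecNorm x) (x : Fin d → ℝ) :
    vecNorm ((A - B) *ᵥ x) ≤ 2 * c * vecNorm x := by
  grw [sub_mulVec, vecNorm_sub_le, hA, hB]
  linarith

lemma max_matOpNorm_sub_le (hc : 0 ≤ c) (hA : ∀ x, vecNorm (A *ᵥ x) ≤ c * vecNorm x)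
    (hB : ∀ x, vecNorm (B *ᵥ x) ≤ c * vecNorm x) :
    max (matOpNorm A) (matOpNorm (A - B)) ≤ 2 * c := by
  refine max_le (matOpNorm_le (by positivity) fun x hx => ?_)
    (matOpNorm_le (by positivity) fun x hx => ?_)
  · exact (hA x).trans (by rw [hx, mul_one]; linarith)
  · simpa [hx] using vecNorm_sub_mulVec_le hA hB x

lemma vecNorm_sub_mulVec_sub_le (hc : 1 ≤ c) (hA : ∀ x, vecNorm (A *ᵥ x) ≤ c * vecNorm x)
    (hB : ∀ x, vecNorm (B *ᵥ x) ≤ c * vecNorm x) {u v : Fin d → ℝ} (hu : vecNorm u ≤ 1)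
    (hv : vecNorm v ≤ 1) (θ : Fin d → ℝ) :
    vecNorm ((A - B) *ᵥ θ - (u - v)) ≤ 2 * c * (vecNorm θ + 1) := by
  grw [vecNorm_sub_le, vecNorm_sub_le u, vecNorm_sub_mulVec_le hA hB, hu, hv]
  linarith

end NoiseBounds

theorem stmt_16_general {d : ℕ} (γ : ℝ) (hγ : γ ∈ Set.Ioo (0 : ℝ) 1)
    {Om : Type} [MeasurableSpace Om]
    (Pr : Measure Om) [IsProbabilityMeasure Pr]
    (φ φ' : Om → Fin d → ℝ) (r : Om → ℝ)
    (hφmeas : Measurable φ) (hφ'meas : Measurable φ') (hrmeas : Measurable r)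
    (hφbound : ∀ᵐ ω ∂Pr, vecNorm (φ ω) ≤ 1)
    (hφ'bound : ∀ᵐ ω ∂Pr, vecNorm (φ' ω) ≤ 1)
    (hsame : Measure.map φ Pr = Measure.map φ' Pr)
    (hr : ∀ᵐ ω ∂Pr, r ω ∈ Set.Icc (0 : ℝ) 1)
    (Abar : Matrix (Fin d) (Fin d) ℝ)
    (hAbar : ∀ i j, Abar i j = ∫ ω, φ ω i * (φ ω j - γ * φ' ω j) ∂Pr)
    (bbar : Fin d → ℝ)
    (hbbar : ∀ i, bbar i = ∫ ω, φ ω i * r ω ∂Pr)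
    (Sigφ : Matrix (Fin d) (Fin d) ℝ)
    (hSigφ : ∀ i j, Sigφ i j = ∫ ω, φ ω i * φ ω j ∂Pr)
    (θstar : Fin d → ℝ) :
    (∀ᵐ ω ∂Pr,
      max (matOpNorm (Matrix.of fun i j => φ ω i * (φ ω j - γ * φ' ω j)))
          (matOpNorm ((Matrix.of fun i j => φ ω i * (φ ω j - γ * φ' ω j)) - Abar))
        ≤ 2 * (1 + γ)
      ∧ vecNorm (((Matrix.of fun i j => φ ω i * (φ ω j - γ * φ' ω j)) - Abar).mulVec θstar
            - (r ω • φ ω - bbar))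
        ≤ 2 * (1 + γ) * (vecNorm θstar + 1))
    ∧ (∀ α : ℝ, α ∈ Set.Icc (0 : ℝ) ((1 - γ) / (1 + γ) ^ 2) →
        (matOpNorm (1 - α • Abar)) ^ 2 ≤ 1 - α * (1 - γ) * lambdaMin Sigφ) := by
  obtain ⟨hγ0, hγ1⟩ := hγ
  have hpair : IsBoundedStationaryPair Pr φ φ' := ⟨hφmeas, hφ'meas, hφbound, hφ'bound, hsame⟩
  obtain rfl : Abar = crossMoment Pr φ (φ - γ • φ') := Matrix.ext hAbar
  obtain rfl : Sigφ = crossMoment Pr φ φ := Matrix.ext hSigφ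
  have hrφ : ∀ᵐ ω ∂Pr, vecNorm (r ω • φ ω) ≤ 1 := by
    filter_upwards [hφbound, hr] with ω hφω hrω
    rw [vecNorm_smul, abs_of_nonneg hrω.1]
    exact mul_le_one₀ hrω.2 (vecNorm_nonneg _) hφω
  have hbbar_le : vecNorm bbar ≤ 1 :=
    vecNorm_le_of_apply_eq_integral (hrmeas.smul hφmeas) hrφ fun i =>
      (hbbar i).trans (by simp [mul_comm])
  refine ⟨?_, fun α ⟨hα0, hα⟩ => ?_⟩
  · filter_upwards [hφbound, hφ'bound, hrφ] with ω hφω hφ'ω hrφω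
    have hAω : ∀ x, vecNorm (vecMulVec (φ ω) (φ ω - γ • φ' ω) *ᵥ x) ≤ (1 + γ) * vecNorm x :=
      fun x => (vecNorm_vecMulVec_mulVec_le _ _ x).trans <| mul_le_mul_of_nonneg_right
        ((mul_le_mul hφω (vecNorm_sub_smul_le hγ0.le hφω hφ'ω) (vecNorm_nonneg _)
          zero_le_one).trans_eq (one_mul _)) (vecNorm_nonneg x)
    exact ⟨max_matOpNorm_sub_le (by linarith) hAω (hpair.vecNorm_crossMoment_mulVec_le hγ0.le),
      vecNorm_sub_mulVec_sub_le (by linarith) hAω (hpair.vecNorm_crossMoment_mulVec_le hγ0.le)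
        hrφω hbbar_le θstar⟩
  · have hαγ : α * (1 + γ) ^ 2 ≤ 1 - γ := (le_div_iff₀ (by positivity)).1 hα
    have hlambda : lambdaMin (crossMoment Pr φ φ) ≤ 1 :=
      lambdaMin_le_of_forall_le hpair.quadForm_crossMoment_self_nonneg zero_le_one fun x hx => by
        simpa [hx] using hpair.quadForm_crossMoment_self_le x
    have hαγ' : 0 ≤ α * (1 - γ) := mul_nonneg hα0 (by linarith)
    refine matOpNorm_sq_le (by nlinarith [mul_le_mul_of_nonneg_left hlambda hαγ']) fun x hx => ?_
    grw [vecNorm_one_sub_smul_mulVec_sq_le hx (hpair.quadForm_crossMoment_self_nonneg x)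
      (hpair.quadForm_crossMoment_ge hγ0.le x) (hpair.vecNorm_crossMoment_mulVec_sq_le hγ0.le x)
      hα0 hαγ, ← lambdaMin_le hpair.quadForm_crossMoment_self_nonneg hx]

/-- Proposition: TD learning with linear function approximation
satisfies the LSA assumptions.  With `A = φ(φ − γφ′)ᵀ`, `b = rφ`, features bounded by
one, `φ` and `φ′` identically distributed and rewards in `[0,1]`:
(i) almost surely `max(‖A‖, ‖A − Ā‖) ≤ 2(1+γ)` and
`‖(A − Ā)θ* − (b − b̄)‖ ≤ 2(1+γ)(‖θ*‖ + 1)`;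
(ii) for every `α ∈ [0, (1−γ)/(1+γ)²]`, `‖I − αĀ‖² ≤ 1 − α(1−γ)λ_min(Σ_φ)`. -/
theorem stmt_16 {d : ℕ} (γ : ℝ) (hγ : γ ∈ Set.Ioo (0 : ℝ) 1)
    {Om : Type} [MeasurableSpace Om]
    (Pr : Measure Om) [IsProbabilityMeasure Pr]
    (φ φ' : Om → Fin d → ℝ) (r : Om → ℝ)
    (hφmeas : Measurable φ) (hφ'meas : Measurable φ') (hrmeas : Measurable r)
    (hφbound : ∀ᵐ ω ∂Pr, vecNorm (φ ω) ≤ 1)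
    (hφ'bound : ∀ᵐ ω ∂Pr, vecNorm (φ' ω) ≤ 1)
    (hsame : Measure.map φ Pr = Measure.map φ' Pr)
    (hr : ∀ᵐ ω ∂Pr, r ω ∈ Set.Icc (0 : ℝ) 1)
    (Abar : Matrix (Fin d) (Fin d) ℝ)
    (hAbar : ∀ i j, Abar i j = ∫ ω, φ ω i * (φ ω j - γ * φ' ω j) ∂Pr)
    (bbar : Fin d → ℝ)
    (hbbar : ∀ i, bbar i = ∫ ω, φ ω i * r ω ∂Pr)
    (Sigφ : Matrix (Fin d) (Fin d) ℝ)
    (hSigφ : ∀ i j, Sigφ i j = ∫ ω, φ ω i * φ ω j ∂Pr)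
    (hSigφpos : Sigφ.PosDef) (hSigφmin : 0 < lambdaMin Sigφ)
    (θstar : Fin d → ℝ) (hθstar : Abar.mulVec θstar = bbar) :
    (∀ᵐ ω ∂Pr,
      max (matOpNorm (Matrix.of fun i j => φ ω i * (φ ω j - γ * φ' ω j)))
          (matOpNorm ((Matrix.of fun i j => φ ω i * (φ ω j - γ * φ' ω j)) - Abar))
        ≤ 2 * (1 + γ)
      ∧ vecNorm (((Matrix.of fun i j => φ ω i * (φ ω j - γ * φ' ω j)) - Abar).mulVec θstar
            - (r ω • φ ω - bbar))
        ≤ 2 * (1 + γ) * (vecNorm θstar + 1))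
    ∧ (∀ α : ℝ, α ∈ Set.Icc (0 : ℝ) ((1 - γ) / (1 + γ) ^ 2) →
        (matOpNorm (1 - α • Abar)) ^ 2 ≤ 1 - α * (1 - γ) * lambdaMin Sigφ) :=
  stmt_16_general γ hγ Pr φ φ' r hφmeas hφ'meas hrmeas hφbound hφ'bound hsame hr Abar hAbar bbar
    hbbar Sigφ hSigφ θstar

end
end

section
/- The following deterministic identity holds: for every k ≥ n, θ_k^b − θ_k = − Σ_{ℓ=n+1}^{k} α_ℓ (w_ℓ − 1) Γ^b_{ℓ+1:k} ε̃_ℓ, where ε̃_ℓ = A_ℓ(θ_{ℓ−1} − θ*) + ε_ℓ and Γ^b_{m:k} = ∏_{i=m}^{k}(I − α_i w_i A_i). -/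
open MeasureTheory ProbabilityTheory Matrix Finset

noncomputable section

/-! The difference `δ k = θb k - θ k` obeys the linear recursion
`δ (k + 1) = (1 - α w A) δ k - α (w - 1) (A θ k - b)`, with `δ n = 0`, and
`A (k + 1) θ k - b (k + 1)` is exactly `ε̃ (k + 1)` because `Abar θstar = bbar`.
Unrolling the recursion by variation of constants gives the expansion. -/

namespace matProd

variable {d : ℕ} (F : ℕ → Matrix (Fin d) (Fin d) ℝ)

theorem eq_one_of_lt {m k : ℕ} (h : k < m) : matProd m k F = 1 := by
  simp [matProd, Nat.sub_eq_zero_of_le (Nat.succ_le_of_lt h)]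

theorem succ_left {m k : ℕ} (h : m ≤ k + 1) : matProd m (k + 1) F = F (k + 1) * matProd m k F := by
  rw [matProd, matProd, show k + 1 + 1 - m = k + 1 - m + 1 by omega, List.range'_concat,
    show m + 1 * (k + 1 - m) = k + 1 by omega]
  simp

theorem eq_mulVec_add_sum_of_recurrence {e g : ℕ → Fin d → ℝ} {n : ℕ}
    (hrec : ∀ k, n ≤ k → e (k + 1) = F (k + 1) *ᵥ e k + g (k + 1)) :
    ∀ k, n ≤ k → e k = matProd (n + 1) k F *ᵥ e n +
      ∑ ℓ ∈ Icc (n + 1) k, matProd (ℓ + 1) k F *ᵥ g ℓ := by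
  intro k hk
  induction k, hk using Nat.le_induction with
  | base => simp [eq_one_of_lt F (Nat.lt_succ_self n)]
  | succ k hk ih =>
    rw [hrec k hk, ih, sum_Icc_succ_top (by omega), eq_one_of_lt F (Nat.lt_succ_self _),
      one_mulVec, succ_left F (by omega), ← mulVec_mulVec, mulVec_add, mulVec_sum, add_assoc]
    congr 2
    refine sum_congr rfl fun ℓ hℓ => ?_
    rw [succ_left F (by simp at hℓ; omega), mulVec_mulVec]

end matProd

theorem mulVec_sub_add_noise_eq {d : ℕ} (A Abar : Matrix (Fin d) (Fin d) ℝ)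
    (b bbar θstar θ : Fin d → ℝ) (hsol : Abar *ᵥ θstar = bbar) :
    A *ᵥ (θ - θstar) + ((A - Abar) *ᵥ θstar - (b - bbar)) = A *ᵥ θ - b := by
  rw [mulVec_sub, sub_mulVec, hsol]
  abel

theorem weighted_step_sub_step {d : ℕ} (A : Matrix (Fin d) (Fin d) ℝ) (b x y : Fin d → ℝ)
    (a w : ℝ) :
    (x - (a * w) • (A *ᵥ x - b)) - (y - a • (A *ᵥ y - b))
      = (1 - (a * w) • A) *ᵥ (x - y) + -(a * (w - 1)) • (A *ᵥ y - b) := by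
  rw [sub_mulVec, one_mulVec, smul_mulVec, mulVec_sub]
  module

theorem stmt_18_general {d : ℕ} (n : ℕ)
    (A : ℕ → Matrix (Fin d) (Fin d) ℝ) (b : ℕ → Fin d → ℝ)
    (α w : ℕ → ℝ)
    (Abar : Matrix (Fin d) (Fin d) ℝ) (bbar θstar : Fin d → ℝ)
    (hsol : Abar.mulVec θstar = bbar)
    (eps : ℕ → Fin d → ℝ)
    (heps : ∀ k, eps k = (A k - Abar).mulVec θstar - (b k - bbar))
    (θ θb : ℕ → Fin d → ℝ)
    (hθrec : ∀ k : ℕ, θ (k + 1) = θ k - α (k + 1) • ((A (k + 1)).mulVec (θ k) - b (k + 1)))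
    (hθbinit : θb n = θ n)
    (hθbrec : ∀ k, n ≤ k → θb (k + 1) =
      θb k - (α (k + 1) * w (k + 1)) • ((A (k + 1)).mulVec (θb k) - b (k + 1))) :
    ∀ k, n ≤ k →
      θb k - θ k
        = - ∑ ℓ ∈ Finset.Icc (n + 1) k,
            (α ℓ * (w ℓ - 1)) •
              (matProd (ℓ + 1) k fun i => 1 - (α i * w i) • A i).mulVec
                ((A ℓ).mulVec (θ (ℓ - 1) - θstar) + eps ℓ) := by
  set F : ℕ → Matrix (Fin d) (Fin d) ℝ := fun i => 1 - (α i * w i) • A i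
  set g : ℕ → Fin d → ℝ := fun ℓ =>
    -(α ℓ * (w ℓ - 1)) • ((A ℓ).mulVec (θ (ℓ - 1) - θstar) + eps ℓ)
  have hstep : ∀ k, n ≤ k → θb (k + 1) - θ (k + 1) = F (k + 1) *ᵥ (θb k - θ k) + g (k + 1) := by
    intro k hk
    simp only [F, g, Nat.add_sub_cancel, heps, mulVec_sub_add_noise_eq _ _ _ _ _ _ hsol]
    rw [hθbrec k hk, hθrec k, weighted_step_sub_step]
  intro k hk
  rw [matProd.eq_mulVec_add_sum_of_recurrence F (e := fun k => θb k - θ k) hstep k hk,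
    hθbinit, sub_self, mulVec_zero, zero_add, ← sum_neg_distrib]
  simp only [g, neg_smul, mulVec_neg, mulVec_smul]

/-- Lemma: expansion of the bootstrap-vs-original difference.
With the LSA iterates `θ_k` and the multiplier-bootstrap iterates `θ_k^b` (started from
`θ_n^b = θ_n`), for every `k ≥ n`,
`θ_k^b − θ_k = −Σ_{ℓ=n+1}^k α_ℓ(w_ℓ − 1)Γ^b_{ℓ+1:k} ε̃_ℓ`, where
`ε̃_ℓ = A_ℓ(θ_{ℓ−1} − θ*) + ε_ℓ` and `Γ^b_{m:k} = ∏_{i=m}^k (I − α_i w_i A_i)`. -/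
theorem stmt_18 {d : ℕ} (n : ℕ)
    (A : ℕ → Matrix (Fin d) (Fin d) ℝ) (b : ℕ → Fin d → ℝ)
    (α w : ℕ → ℝ)
    (Abar : Matrix (Fin d) (Fin d) ℝ) (bbar θstar : Fin d → ℝ)
    (hsol : Abar.mulVec θstar = bbar)
    (eps : ℕ → Fin d → ℝ)
    (heps : ∀ k, eps k = (A k - Abar).mulVec θstar - (b k - bbar))
    (θ0 : Fin d → ℝ) (θ θb : ℕ → Fin d → ℝ)
    (hθ0 : θ 0 = θ0)
    (hθrec : ∀ k : ℕ, θ (k + 1) = θ k - α (k + 1) • ((A (k + 1)).mulVec (θ k) - b (k + 1)))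
    (hθbinit : θb n = θ n)
    (hθbrec : ∀ k, n ≤ k → θb (k + 1) =
      θb k - (α (k + 1) * w (k + 1)) • ((A (k + 1)).mulVec (θb k) - b (k + 1))) :
    ∀ k, n ≤ k →
      θb k - θ k
        = - ∑ ℓ ∈ Finset.Icc (n + 1) k,
            (α ℓ * (w ℓ - 1)) •
              (matProd (ℓ + 1) k fun i => 1 - (α i * w i) • A i).mulVec
                ((A ℓ).mulVec (θ (ℓ - 1) - θstar) + eps ℓ) :=
  stmt_18_general n A b α w Abar bbar θstar hsol eps heps θ θb hθrec hθbinit hθbrec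

end
end
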